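/- Let μ > 0, λ0 ∈ ℝ, α ≥ 0, A ∈ ℝ, C ≠ 0, ε ∈ (0,1), and let φ_w : ℝ → ℝ be continuous with φ_w(1−t) = A t^α + o(t^α) as t ↓ 0. With λ = 2 and a_h = h^{−λ(1+α)−λ0+1} exp(−1/(μ h^λ)), one has a_h · (1/(πC)) h^{λ0−1} ∫_ε^1 φ_w(s) s^{−λ0} exp(s^λ/(μ h^λ)) ds → (A/(πC)) (μ/λ)^{1+α} Γ(α+1) as h ↓ 0. -/

import Mathlib

open Real Filter
open MeasureTheory Set Topology Asymptotics

/-!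
Put `x = 1 / (μ h²)`, so `x → ∞`. Substituting `s = 1 - t`, the expression becomes
`μ^(1+α) / (π C)` times `x^(1+α) ∫₀^(1-ε) g t e^(-x (2t - t²)) dt`, where
`g t = φw (1 - t) (1 - t)^(-λ0) = A t^α + o(t^α)`. After `t = u / x` this is
`∫₀^∞ 1_{u ≤ (1-ε) x} x^α g (u/x) e^(-u (2 - u/x)) du`. The integrand tends to `A u^α e^(-2u)`
and is dominated by `M u^α e^(-(1+ε) u)`, so dominated convergence and
`∫₀^∞ u^α e^(-2u) du = Γ(α+1) / 2^(α+1)` give the limit.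
-/

theorem Asymptotics.IsLittleO.mul_of_tendsto_one {ι : Type*} {l : Filter ι} {f g k : ι → ℝ}
    {A : ℝ} (hf : (fun t => f t - A * g t) =o[l] g) (hk : Tendsto k l (𝓝 1)) :
    (fun t => f t * k t - A * g t) =o[l] g := by
  have hfk : (fun t => (f t - A * g t) * k t) =o[l] g := by
    simpa using hf.mul_isBigO (hk.isBigO_one ℝ)
  have hgk : (fun t => A * g t * (k t - 1)) =o[l] g := by
    simpa using ((isBigO_refl g l).const_mul_left A).mul_isLittleO
      ((isLittleO_one_iff ℝ).2 (by simpa using hk.sub_const 1))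
  exact (hfk.add hgk).congr_left fun t => by ring

theorem integral_mul_exp_mul_sq_eq {ψ : ℝ → ℝ} (ε x : ℝ) :
    ∫ s in ε..1, ψ s * exp (x * s ^ 2)
      = exp x * ∫ t in 0..1 - ε, ψ (1 - t) * exp (-(x * (2 * t - t ^ 2))) := by
  calc ∫ s in ε..1, ψ s * exp (x * s ^ 2)
      = ∫ t in 0..1 - ε, ψ (1 - t) * exp (x * (1 - t) ^ 2) := by
        rw [intervalIntegral.integral_comp_sub_left (fun s => ψ s * exp (x * s ^ 2)),
          sub_sub_cancel, sub_zero]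
    _ = _ := by
        rw [← intervalIntegral.integral_const_mul]
        congr with t
        rw [mul_left_comm, ← exp_add]
        ring_nf

theorem integral_rpow_mul_exp_neg_mul_Ioi_eq_Gamma_div {α : ℝ} (hα : -1 < α) {c : ℝ} (hc : 0 < c) :
    ∫ u in Ioi 0, u ^ α * exp (-(c * u)) = Gamma (α + 1) / c ^ (α + 1) := by
  have h := integral_rpow_mul_exp_neg_mul_Ioi (a := α + 1) (by linarith) hc
  rw [add_sub_cancel_right] at h
  rw [h, one_div, inv_rpow hc.le, inv_mul_eq_div]

section Laplace

variable {α A b : ℝ} {g : ℝ → ℝ}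

theorem tendsto_div_rpow_of_isLittleO
    (hg : (fun t => g t - A * t ^ α) =o[𝓝[>] 0] fun t => t ^ α) :
    Tendsto (fun t => g t / t ^ α) (𝓝[>] 0) (𝓝 A) := by
  have h := hg.tendsto_div_nhds_zero.add_const A
  rw [zero_add] at h
  refine h.congr' ?_
  filter_upwards [self_mem_nhdsWithin] with t (ht : 0 < t)
  field_simp [(rpow_pos_of_pos ht α).ne']
  ring

theorem exists_abs_le_mul_rpow_of_isLittleO (hα : 0 ≤ α) (hgc : ContinuousOn g (Icc 0 b))
    (hg : (fun t => g t - A * t ^ α) =o[𝓝[>] 0] fun t => t ^ α) :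
    ∃ M, 0 ≤ M ∧ ∀ t ∈ Ioc 0 b, |g t| ≤ M * t ^ α := by
  obtain ⟨δ, hδ, hnear⟩ : ∃ δ > 0, ∀ t ∈ Ioo 0 δ, |g t / t ^ α| ≤ |A| + 1 := by
    have h := (tendsto_div_rpow_of_isLittleO hg).abs.eventually
      (eventually_le_nhds (lt_add_one |A|))
    exact mem_nhdsGT_iff_exists_Ioo_subset.1 h
  obtain ⟨K, hK⟩ := isCompact_Icc.exists_bound_of_continuousOn hgc
  refine ⟨max (|A| + 1) (K / δ ^ α), by positivity, fun t ⟨ht0, htb⟩ => ?_⟩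
  have htα : 0 < t ^ α := rpow_pos_of_pos ht0 α
  rcases lt_or_ge t δ with htδ | htδ
  · calc |g t| = |g t / t ^ α| * t ^ α := by
          rw [abs_div, abs_of_pos htα, div_mul_cancel₀ _ htα.ne']
      _ ≤ (|A| + 1) * t ^ α := by gcongr; exact hnear t ⟨ht0, htδ⟩
      _ ≤ _ := by gcongr; exact le_max_left _ _
  · have hKt : |g t| ≤ K := by simpa using hK t ⟨ht0.le, htb⟩
    have hδα : 0 < δ ^ α := rpow_pos_of_pos hδ α
    calc |g t| ≤ K / δ ^ α * δ ^ α := by rwa [div_mul_cancel₀ _ hδα.ne']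
      _ ≤ K / δ ^ α * t ^ α := by
          gcongr
          · exact div_nonneg ((abs_nonneg _).trans hKt) hδα.le
      _ ≤ _ := by gcongr; exact le_max_right _ _

noncomputable def scaledIntegrand (α : ℝ) (g : ℝ → ℝ) (x u : ℝ) : ℝ :=
  x ^ α * g (u / x) * exp (-(u * (2 - u / x)))

theorem abs_scaledIntegrand_le {M x u : ℝ} (hM : 0 ≤ M) (hbound : ∀ t ∈ Ioc 0 b, |g t| ≤ M * t ^ α)
    (hx : 0 < x) (hu : u ∈ Ioc 0 (b * x)) :
    |scaledIntegrand α g x u| ≤ M * (u ^ α * exp (-((2 - b) * u))) := by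
  obtain ⟨hu0, hub⟩ := hu
  have hub' : u / x ≤ b := (div_le_iff₀ hx).2 hub
  have hgt := hbound (u / x) ⟨div_pos hu0 hx, hub'⟩
  have hxα : 0 < x ^ α := rpow_pos_of_pos hx α
  have hpow : x ^ α * (u / x) ^ α = u ^ α := by
    rw [← mul_rpow hx.le (div_pos hu0 hx).le, mul_div_cancel₀ _ hx.ne']
  rw [scaledIntegrand, abs_mul, abs_mul, abs_of_pos hxα, abs_exp]
  calc x ^ α * |g (u / x)| * exp (-(u * (2 - u / x)))
      ≤ x ^ α * (M * (u / x) ^ α) * exp (-((2 - b) * u)) := by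
        have hexp : -(u * (2 - u / x)) ≤ -((2 - b) * u) := by nlinarith
        gcongr
    _ = M * (u ^ α * exp (-((2 - b) * u))) := by rw [← hpow]; ring

theorem tendsto_indicator_scaledIntegrand (hb : 0 < b)
    (hg : (fun t => g t - A * t ^ α) =o[𝓝[>] 0] fun t => t ^ α) {u : ℝ} (hu : 0 < u) :
    Tendsto (fun x => (Ioc 0 (b * x)).indicator (scaledIntegrand α g x) u) atTop
      (𝓝 (A * (u ^ α * exp (-(2 * u))))) := by
  have hux : Tendsto (fun x => u / x) atTop (𝓝[>] 0) :=
    tendsto_nhdsWithin_of_tendsto_nhds_of_eventually_within _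
      (tendsto_const_nhds.div_atTop tendsto_id)
      ((eventually_gt_atTop 0).mono fun x hx => div_pos hu hx)
  have hratio := (tendsto_div_rpow_of_isLittleO hg).comp hux
  have hexp : Tendsto (fun x => exp (-(u * (2 - u / x)))) atTop (𝓝 (exp (-(2 * u)))) := by
    have := (((hux.mono_right nhdsWithin_le_nhds).const_sub 2).const_mul u).neg.rexp
    simpa [mul_comm u] using this
  have hlim := (hratio.const_mul (u ^ α)).mul hexp
  rw [show A * (u ^ α * exp (-(2 * u))) = u ^ α * A * exp (-(2 * u)) by ring]
  refine hlim.congr' ?_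
  filter_upwards [eventually_ge_atTop (u / b), eventually_gt_atTop 0] with x hxb hx
  have hmem : u ∈ Ioc 0 (b * x) := ⟨hu, by rwa [div_le_iff₀ hb, mul_comm] at hxb⟩
  have hux0 : 0 < u / x := div_pos hu hx
  rw [indicator_of_mem hmem, scaledIntegrand, Function.comp_apply,
    show x ^ α = u ^ α / (u / x) ^ α by rw [← div_rpow hu.le hux0.le, div_div_cancel₀ hu.ne']]
  field_simp [(rpow_pos_of_pos hux0 α).ne']

theorem tendsto_integral_scaledIntegrand (hα : 0 ≤ α) (hb0 : 0 < b) (hb2 : b < 2)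
    (hgc : ContinuousOn g (Icc 0 b))
    (hg : (fun t => g t - A * t ^ α) =o[𝓝[>] 0] fun t => t ^ α) :
    Tendsto (fun x => ∫ u in Ioi 0, (Ioc 0 (b * x)).indicator (scaledIntegrand α g x) u) atTop
      (𝓝 (A * (Gamma (α + 1) / 2 ^ (α + 1)))) := by
  obtain ⟨M, hM0, hM⟩ := exists_abs_le_mul_rpow_of_isLittleO hα hgc hg
  rw [← integral_rpow_mul_exp_neg_mul_Ioi_eq_Gamma_div (by linarith) two_pos, ← integral_const_mul]
  refine tendsto_integral_filter_of_dominated_convergence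
    (fun u => M * (u ^ α * exp (-((2 - b) * u)))) ?_ ?_ ?_ ?_
  · filter_upwards [eventually_gt_atTop 0] with x hx
    refine (aestronglyMeasurable_indicator_iff measurableSet_Ioc).2
      (ContinuousOn.aestronglyMeasurable ?_ measurableSet_Ioc)
    exact (continuousOn_const.mul (hgc.comp (continuousOn_id.div_const x) fun u hu =>
      ⟨div_nonneg hu.1.le hx.le, (div_le_iff₀ hx).2 hu.2⟩)).mul (by fun_prop)
  · filter_upwards [eventually_gt_atTop 0] with x hx
    filter_upwards [ae_restrict_mem measurableSet_Ioi] with u (hu : 0 < u)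
    by_cases hmem : u ∈ Ioc 0 (b * x)
    · rw [indicator_of_mem hmem, Real.norm_eq_abs]
      exact abs_scaledIntegrand_le hM0 hM hx hmem
    · rw [indicator_of_notMem hmem, norm_zero]
      positivity
  · refine Integrable.const_mul ?_ M
    exact (integrableOn_rpow_mul_exp_neg_mul_rpow (s := α) (by linarith) one_pos
      (sub_pos.2 hb2)).congr_fun (fun u _ => by simp only [rpow_one, neg_mul]) measurableSet_Ioi
  · exact (ae_restrict_iff' measurableSet_Ioi).2
      (.of_forall fun u hu => tendsto_indicator_scaledIntegrand hb0 hg hu)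

theorem rpow_mul_integral_eq_integral_scaledIntegrand (hb : 0 ≤ b) {x : ℝ} (hx : 0 < x) :
    x ^ (1 + α) * ∫ t in 0..b, g t * exp (-(x * (2 * t - t ^ 2)))
      = ∫ u in Ioi 0, (Ioc 0 (b * x)).indicator (scaledIntegrand α g x) u := by
  have hsubst := intervalIntegral.integral_comp_div (a := 0) (b := b * x)
    (fun t => g t * exp (-(x * (2 * t - t ^ 2)))) hx.ne'
  rw [zero_div, mul_div_cancel_right₀ _ hx.ne', smul_eq_mul] at hsubst
  rw [rpow_add hx, rpow_one, mul_comm x, mul_assoc, ← hsubst, ← intervalIntegral.integral_const_mul,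
    intervalIntegral.integral_of_le (mul_nonneg hb hx.le), setIntegral_indicator measurableSet_Ioc,
    inter_eq_self_of_subset_right Ioc_subset_Ioi_self]
  refine setIntegral_congr_fun measurableSet_Ioc fun u _ => ?_
  rw [scaledIntegrand, mul_assoc]
  congr 3
  field_simp

theorem tendsto_rpow_mul_integral_exp_neg (hα : 0 ≤ α) (hb0 : 0 < b) (hb2 : b < 2)
    (hgc : ContinuousOn g (Icc 0 b))
    (hg : (fun t => g t - A * t ^ α) =o[𝓝[>] 0] fun t => t ^ α) :
    Tendsto (fun x => x ^ (1 + α) * ∫ t in 0..b, g t * exp (-(x * (2 * t - t ^ 2)))) atTop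
      (𝓝 (A * (Gamma (α + 1) / 2 ^ (α + 1)))) :=
  (tendsto_integral_scaledIntegrand hα hb0 hb2 hgc hg).congr' <|
    (eventually_gt_atTop 0).mono fun _ hx =>
      (rpow_mul_integral_eq_integral_scaledIntegrand hb0.le hx).symm

end Laplace

theorem tendsto_inv_const_mul_sq_nhdsGT_zero {μ : ℝ} (hμ : 0 < μ) :
    Tendsto (fun h : ℝ => (μ * h ^ 2)⁻¹) (𝓝[>] 0) atTop := by
  refine Tendsto.inv_tendsto_nhdsGT_zero (tendsto_nhdsWithin_of_tendsto_nhds_of_eventually_within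
    _ ?_ ?_)
  · exact ((by fun_prop : Continuous fun h : ℝ => μ * h ^ 2).tendsto' 0 0 (by simp)).mono_left
      nhdsWithin_le_nhds
  · filter_upwards [self_mem_nhdsWithin] with h (hh : 0 < h)
    exact mem_Ioi.2 (by positivity)

theorem leading_term_eq_rpow_mul_integral_exp_neg {μ lam0 α C ε h : ℝ} {ψ : ℝ → ℝ} (hμ : 0 < μ)
    (hh : 0 < h) :
    h ^ (-(2 : ℝ) * (1 + α) - lam0 + 1) * exp (-1 / (μ * h ^ (2 : ℝ)))
        * ((1 / (π * C)) * h ^ (lam0 - 1)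
          * ∫ s in ε..1, ψ s * exp (s ^ (2 : ℝ) / (μ * h ^ (2 : ℝ))))
      = μ ^ (1 + α) / (π * C) * ((μ * h ^ 2)⁻¹ ^ (1 + α)
          * ∫ t in 0..1 - ε, ψ (1 - t) * exp (-((μ * h ^ 2)⁻¹ * (2 * t - t ^ 2)))) := by
  have hpow : h ^ (-(2 : ℝ) * (1 + α) - lam0 + 1) * h ^ (lam0 - 1)
      = μ ^ (1 + α) * (μ * h ^ 2)⁻¹ ^ (1 + α) := by
    rw [← rpow_add hh, ← mul_rpow hμ.le (by positivity), mul_inv, mul_inv_cancel_left₀ hμ.ne',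
      ← rpow_two, ← rpow_neg_one, ← rpow_mul hh.le, ← rpow_mul hh.le]
    ring_nf
  have hexp : exp (-(μ * h ^ 2)⁻¹) * exp (μ * h ^ 2)⁻¹ = 1 := by
    rw [← exp_add, neg_add_cancel, exp_zero]
  simp only [rpow_two, div_eq_inv_mul (_ ^ 2), neg_div, one_div]
  rw [integral_mul_exp_mul_sq_eq]
  generalize (∫ t in (0 : ℝ)..1 - ε, ψ (1 - t) * exp (-((μ * h ^ 2)⁻¹ * (2 * t - t ^ 2)))) = J
  linear_combination (π * C)⁻¹ * J * hpow
    + (π * C)⁻¹ * J * h ^ (-(2 : ℝ) * (1 + α) - lam0 + 1) * h ^ (lam0 - 1) * hexp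

theorem leading_term_limit_general (μ lam0 α A C ε : ℝ) (φw : ℝ → ℝ)
    (hμ : 0 < μ) (hα : 0 ≤ α) (hε0 : 0 < ε) (hε1 : ε < 1)
    (hφc : Continuous φw)
    (hφ : (fun t => φw (1 - t) - A * t ^ α) =o[nhdsWithin 0 (Set.Ioi 0)] fun t => t ^ α) :
    Filter.Tendsto
      (fun h : ℝ =>
        (h ^ (-(2 : ℝ) * (1 + α) - lam0 + 1) * Real.exp (-1 / (μ * h ^ (2 : ℝ))))
          * ((1 / (π * C)) * h ^ (lam0 - 1)
            * ∫ s in ε..1, φw s * s ^ (-lam0) * Real.exp (s ^ (2 : ℝ) / (μ * h ^ (2 : ℝ)))))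
      (nhdsWithin 0 (Set.Ioi 0))
      (nhds ((A / (π * C)) * (μ / 2) ^ (1 + α) * Real.Gamma (α + 1))) := by
  set g : ℝ → ℝ := fun t => φw (1 - t) * (1 - t) ^ (-lam0)
  have hreflect : Continuous fun t : ℝ => 1 - t := by fun_prop
  have hgc : ContinuousOn g (Icc 0 (1 - ε)) :=
    (hφc.comp hreflect).continuousOn.mul (hreflect.continuousOn.rpow_const fun t ht =>
      Or.inl (by linarith [ht.2]))
  have hg : (fun t => g t - A * t ^ α) =o[𝓝[>] 0] fun t => t ^ α := by
    refine hφ.mul_of_tendsto_one (tendsto_nhdsWithin_of_tendsto_nhds ?_)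
    have hk := (hreflect.continuousAt (x := 0)).rpow_const (p := -lam0) (Or.inl (by norm_num))
    simpa using hk.tendsto
  have hlim := ((tendsto_rpow_mul_integral_exp_neg hα (by linarith) (by linarith) hgc hg).comp
    (tendsto_inv_const_mul_sq_nhdsGT_zero hμ)).const_mul (μ ^ (1 + α) / (π * C))
  rw [show A / (π * C) * (μ / 2) ^ (1 + α) * Gamma (α + 1)
      = μ ^ (1 + α) / (π * C) * (A * (Gamma (α + 1) / 2 ^ (α + 1))) by
    rw [div_rpow hμ.le zero_le_two, add_comm 1 α]; ring]
  refine hlim.congr' ?_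
  filter_upwards [self_mem_nhdsWithin] with h (hh : 0 < h)
  exact (leading_term_eq_rpow_mul_integral_exp_neg
    (ψ := fun s => φw s * s ^ (-lam0)) hμ hh).symm

/-- Normalization of the leading term of the deconvolution estimator (case `λ = 2`). -/
theorem leading_term_limit (μ lam0 α A C ε : ℝ) (φw : ℝ → ℝ)
    (hμ : 0 < μ) (hα : 0 ≤ α) (hC : C ≠ 0) (hε0 : 0 < ε) (hε1 : ε < 1)
    (hφc : Continuous φw)
    (hφ : (fun t => φw (1 - t) - A * t ^ α) =o[nhdsWithin 0 (Set.Ioi 0)] fun t => t ^ α) :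
    Filter.Tendsto
      (fun h : ℝ =>
        (h ^ (-(2 : ℝ) * (1 + α) - lam0 + 1) * Real.exp (-1 / (μ * h ^ (2 : ℝ))))
          * ((1 / (π * C)) * h ^ (lam0 - 1)
            * ∫ s in ε..1, φw s * s ^ (-lam0) * Real.exp (s ^ (2 : ℝ) / (μ * h ^ (2 : ℝ)))))
      (nhdsWithin 0 (Set.Ioi 0))
      (nhds ((A / (π * C)) * (μ / 2) ^ (1 + α) * Real.Gamma (α + 1))) :=
  leading_term_limit_general μ lam0 α A C ε φw hμ hα hε0 hε1 hφc hφ
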